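/- For an attractive potential φ (subadditive, φ(0)=0, nondecreasing, with φ(ℓ)/ℓ → 0 as ℓ → ∞), the free energy λ₀ := lim_{n→∞} (1/n) log Σ_{|γ|=n} exp(−Φ(γ)) equals log(2d). -/

import Mathlib

open Finset Filter

/-- A step of the nearest-neighbor walk on `ℤ^d`: a coordinate direction and a sign. -/
def step (d : ℕ) (s : Fin d × Bool) : Fin d → ℤ :=
  fun j => if j = s.1 then (if s.2 then 1 else -1) else 0

/-- Position after `k` steps of the path encoded by the step sequence `ω` (starting at `0`). -/
def pathPos {d n : ℕ} (ω : Fin n → Fin d × Bool) (k : ℕ) : Fin d → ℤ :=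
  ∑ i ∈ Finset.range k, if h : i < n then step d (ω ⟨i, h⟩) else 0

/-- Local time of the path at the vertex `x`: number of indices `0 ≤ k ≤ n` with `γ(k) = x`. -/
def locTime {d n : ℕ} (ω : Fin n → Fin d × Bool) (x : Fin d → ℤ) : ℕ :=
  ((Finset.range (n + 1)).filter fun k => pathPos ω k = x).card

/-- Internal energy `Φ(γ) = ∑_x φ(ℓ_x(γ))` (only visited vertices contribute when `φ 0 = 0`). -/
noncomputable def energy {d n : ℕ} (φ : ℕ → ℝ) (ω : Fin n → Fin d × Bool) : ℝ :=
  ∑ x ∈ (Finset.range (n + 1)).image (pathPos ω), φ (locTime ω x)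

/-- Partition function of length-`n` nearest-neighbor paths on `ℤ^d` starting at the origin. -/
noncomputable def Zpart (d : ℕ) (φ : ℕ → ℝ) (n : ℕ) : ℝ :=
  ∑ ω : Fin n → Fin d × Bool, Real.exp (-(energy φ ω))

/-!
Since `Φ ≥ 0`, `Z_n ≤ (2d)^n`. For the lower bound, keep only the walks confined to the cube
`{0, …, 2p+1}^d`: such a walk visits at most `(2p+2)^d` sites, each at most `n+1` times, so its
energy is at most `(2p+2)^d φ(n+1) = o(n)`. To count the confined walks, take the product `u` of
the tents `t(j) = min(j+1, 2p+2-j)` in each coordinate; `u` vanishes off the cube and satisfies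
`∑ₛ u(x+s) ≥ d (2 - 1/(p+1)) u(x)` on it, so the sum of `u` over the endpoints of confined walks
grows at least like `(d (2 - 1/(p+1)))^n`, while `u(0) = 1` and `u ≤ (p+1)^d`. Hence
`liminf (1/n) log Z_n ≥ log (d (2 - 1/(p+1)))` for every `p`, and `p → ∞` gives `log (2d)`.
-/

section Walks

variable {d : ℕ}

lemma pathPos_zero {n : ℕ} (ω : Fin n → Fin d × Bool) : pathPos ω 0 = 0 := by
  simp [pathPos]

lemma pathPos_snoc {n : ℕ} (ω : Fin n → Fin d × Bool) (s : Fin d × Bool) {k : ℕ} (hk : k ≤ n) :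
    pathPos (Fin.snoc ω s : Fin (n + 1) → Fin d × Bool) k = pathPos ω k := by
  refine Finset.sum_congr rfl fun i hi => ?_
  have hin : i < n := (Finset.mem_range.mp hi).trans_le hk
  rw [dif_pos hin, dif_pos (Nat.lt_succ_of_lt hin)]
  exact congrArg (step d) (Fin.snoc_castSucc (i := ⟨i, hin⟩) ..)

lemma pathPos_snoc_last {n : ℕ} (ω : Fin n → Fin d × Bool) (s : Fin d × Bool) :
    pathPos (Fin.snoc ω s : Fin (n + 1) → Fin d × Bool) (n + 1) = pathPos ω n + step d s := by
  rw [pathPos, Finset.sum_range_succ, ← pathPos, pathPos_snoc ω s le_rfl, dif_pos n.lt_succ_self]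
  exact congrArg (fun t => pathPos ω n + step d t) (Fin.snoc_last (α := fun _ => Fin d × Bool) ..)

def Confined (S : Finset (Fin d → ℤ)) {n : ℕ} (ω : Fin n → Fin d × Bool) : Prop :=
  ∀ k ≤ n, pathPos ω k ∈ S

instance (S : Finset (Fin d → ℤ)) (n : ℕ) : DecidablePred (Confined S (n := n)) :=
  fun _ => by unfold Confined; infer_instance

lemma confined_snoc_iff (S : Finset (Fin d → ℤ)) {n : ℕ} (ω : Fin n → Fin d × Bool)
    (s : Fin d × Bool) :
    Confined S (Fin.snoc ω s : Fin (n + 1) → Fin d × Bool) ↔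
      Confined S ω ∧ pathPos ω n + step d s ∈ S := by
  refine ⟨fun h => ⟨fun k hk => ?_, ?_⟩, fun ⟨h, hs⟩ k hk => ?_⟩
  · simpa only [pathPos_snoc ω s hk] using h k (hk.trans n.le_succ)
  · simpa only [pathPos_snoc_last] using h (n + 1) le_rfl
  · rcases Nat.of_le_succ hk with hk | rfl
    · simpa only [pathPos_snoc ω s hk] using h k hk
    · simpa only [pathPos_snoc_last] using hs

lemma sum_confined_succ (S : Finset (Fin d → ℤ)) (u : (Fin d → ℤ) → ℝ)
    (hu : ∀ x ∉ S, u x = 0) (n : ℕ) :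
    ∑ ω : Fin (n + 1) → Fin d × Bool, (if Confined S ω then u (pathPos ω (n + 1)) else 0) =
      ∑ ω : Fin n → Fin d × Bool,
        if Confined S ω then ∑ s, u (pathPos ω n + step d s) else 0 := by
  rw [← (Fin.snocEquiv fun _ => Fin d × Bool).sum_comp
    (fun ω => if Confined S ω then u (pathPos ω (n + 1)) else 0),
    Fintype.sum_prod_type, Finset.sum_comm]
  refine Finset.sum_congr rfl fun ω _ => ?_
  change ∑ s, (if Confined S (Fin.snoc ω s : Fin (n + 1) → Fin d × Bool) then
    u (pathPos (Fin.snoc ω s : Fin (n + 1) → Fin d × Bool) (n + 1)) else 0) = _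
  simp only [confined_snoc_iff, pathPos_snoc_last]
  by_cases hω : Confined S ω
  · simp only [hω, true_and, if_true]
    refine Finset.sum_congr rfl fun s _ => ?_
    split_ifs with hs
    · rfl
    · exact (hu _ hs).symm
  · simp [hω]

theorem pow_mul_le_sum_confined (S : Finset (Fin d → ℤ)) (u : (Fin d → ℤ) → ℝ) {μ : ℝ}
    (hμ : 0 ≤ μ) (hu_out : ∀ x ∉ S, u x = 0)
    (hu_super : ∀ x ∈ S, μ * u x ≤ ∑ s, u (x + step d s)) (n : ℕ) :
    μ ^ n * u 0 ≤ ∑ ω : Fin n → Fin d × Bool, if Confined S ω then u (pathPos ω n) else 0 := by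
  induction n with
  | zero =>
    rw [Fintype.sum_unique, pow_zero, one_mul]
    split_ifs with h
    · rw [pathPos_zero]
    · have h0 : (0 : Fin d → ℤ) ∉ S := fun h0 => h fun k hk => by
        rw [Nat.le_zero.mp hk, pathPos_zero]; exact h0
      rw [hu_out 0 h0]
  | succ n ih =>
    rw [sum_confined_succ S u hu_out, pow_succ', mul_assoc]
    calc μ * (μ ^ n * u 0)
        ≤ μ * ∑ ω : Fin n → Fin d × Bool, if Confined S ω then u (pathPos ω n) else 0 :=
          mul_le_mul_of_nonneg_left ih hμ
      _ ≤ _ := by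
        rw [Finset.mul_sum]
        refine Finset.sum_le_sum fun ω _ => ?_
        split_ifs with h
        · exact hu_super _ (h n le_rfl)
        · rw [mul_zero]

theorem pow_mul_le_card_confined (S : Finset (Fin d → ℤ)) (u : (Fin d → ℤ) → ℝ) {μ M : ℝ}
    (hμ : 0 ≤ μ) (hu_le : ∀ x, u x ≤ M) (hu_out : ∀ x ∉ S, u x = 0)
    (hu_super : ∀ x ∈ S, μ * u x ≤ ∑ s, u (x + step d s)) (n : ℕ) :
    μ ^ n * u 0 ≤ M * #{ω : Fin n → Fin d × Bool | Confined S ω} := by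
  refine (pow_mul_le_sum_confined S u hμ hu_out hu_super n).trans ?_
  rw [Finset.card_filter, Nat.cast_sum, Finset.mul_sum]
  refine Finset.sum_le_sum fun ω _ => ?_
  split_ifs
  · simpa using hu_le _
  · simp

lemma locTime_le {n : ℕ} (ω : Fin n → Fin d × Bool) (x : Fin d → ℤ) : locTime ω x ≤ n + 1 :=
  (Finset.card_filter_le _ _).trans (Finset.card_range _).le

section Potential

variable {φ : ℕ → ℝ} (hφ0 : φ 0 = 0) (hmono : Monotone φ)
include hφ0 hmono

lemma energy_nonneg {n : ℕ} (ω : Fin n → Fin d × Bool) : 0 ≤ energy φ ω :=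
  Finset.sum_nonneg fun _ _ => hφ0 ▸ hmono (Nat.zero_le _)

lemma energy_le_of_confined (S : Finset (Fin d → ℤ)) {n : ℕ} {ω : Fin n → Fin d × Bool}
    (hω : Confined S ω) : energy φ ω ≤ #S * φ (n + 1) := by
  have hrange : (Finset.range (n + 1)).image (pathPos ω) ⊆ S := by
    simpa [Finset.image_subset_iff, Nat.lt_succ_iff, Confined] using hω
  calc energy φ ω ≤ #((Finset.range (n + 1)).image (pathPos ω)) • φ (n + 1) :=
        Finset.sum_le_card_nsmul _ _ _ fun x _ => hmono (locTime_le ω x)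
    _ ≤ #S * φ (n + 1) := by
        rw [nsmul_eq_mul]
        gcongr
        exact hφ0 ▸ hmono (Nat.zero_le _)

lemma Zpart_le (n : ℕ) : Zpart d φ n ≤ (2 * d) ^ n := by
  calc Zpart d φ n ≤ ∑ _ω : Fin n → Fin d × Bool, (1 : ℝ) :=
        Finset.sum_le_sum fun ω _ =>
          Real.exp_le_one_iff.mpr (neg_nonpos.mpr (energy_nonneg hφ0 hmono ω))
    _ = (2 * d) ^ n := by simp [mul_comm]

lemma card_confined_mul_exp_le_Zpart (S : Finset (Fin d → ℤ)) (n : ℕ) :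
    #{ω : Fin n → Fin d × Bool | Confined S ω} * Real.exp (-(#S * φ (n + 1))) ≤ Zpart d φ n := by
  rw [Finset.card_filter, Nat.cast_sum, Finset.sum_mul]
  refine Finset.sum_le_sum fun ω _ => ?_
  split_ifs with hω
  · simpa using energy_le_of_confined hφ0 hmono S hω
  · simpa using (Real.exp_pos _).le

end Potential

lemma Zpart_pos (hd : 0 < d) (φ : ℕ → ℝ) (n : ℕ) : 0 < Zpart d φ n :=
  have : Nonempty (Fin n → Fin d × Bool) := ⟨fun _ => (⟨0, hd⟩, true)⟩
  Finset.sum_pos (fun _ _ => Real.exp_pos _) Finset.univ_nonempty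

end Walks

lemma prod_add_step {M : Type*} [CommMonoid M] {d : ℕ} (f : ℤ → M) (x : Fin d → ℤ) (i : Fin d)
    (b : Bool) :
    ∏ j, f ((x + step d (i, b)) j) =
      f (x i + if b then 1 else -1) * ∏ j ∈ univ.erase i, f (x j) := by
  rw [← Finset.mul_prod_erase univ _ (mem_univ i)]
  congr 1
  · simp [step]
  · exact Finset.prod_congr rfl fun j hj => by simp [step, Finset.ne_of_mem_erase hj]

theorem mul_prod_le_sum_prod_add_step {d : ℕ} (f : ℤ → ℝ) (hf : 0 ≤ f) (A : Set ℤ) {c : ℝ}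
    (hA : ∀ j ∈ A, c * f j ≤ f (j - 1) + f (j + 1)) (x : Fin d → ℤ) (hx : ∀ i, x i ∈ A) :
    d * c * ∏ i, f (x i) ≤ ∑ s : Fin d × Bool, ∏ i, f ((x + step d s) i) := by
  have hconst : d * c * ∏ i, f (x i) = ∑ _i : Fin d, c * ∏ i, f (x i) := by simp [mul_assoc]
  rw [hconst, Fintype.sum_prod_type]
  refine Finset.sum_le_sum fun i _ => ?_
  have hrest : 0 ≤ ∏ j ∈ univ.erase i, f (x j) := Finset.prod_nonneg fun j _ => hf (x j)
  rw [← Finset.mul_prod_erase univ _ (mem_univ i), Fintype.sum_bool, prod_add_step,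
    prod_add_step, ← mul_assoc, ← add_mul]
  simp only [if_true, if_false, Bool.false_eq_true, ← sub_eq_add_neg]
  exact mul_le_mul_of_nonneg_right ((hA _ (hx i)).trans_eq (add_comm _ _)) hrest

def tent (p : ℕ) (j : ℤ) : ℤ := max 0 (min (j + 1) (2 * p + 2 - j))

section Tent

variable (p : ℕ)

lemma tent_nonneg (j : ℤ) : 0 ≤ tent p j := le_max_left _ _

lemma tent_le (j : ℤ) : tent p j ≤ p + 1 := by unfold tent; omega

lemma tent_zero : tent p 0 = 1 := by unfold tent; omega

lemma tent_eq_zero {j : ℤ} (hj : j ∉ Icc 0 (2 * p + 1 : ℤ)) : tent p j = 0 := by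
  rw [mem_Icc] at hj; unfold tent; omega

/-- The tent is concave on `[0, 2p+1]` except at its flat top, where the neighbours of a
maximum sum to `2p+1`. -/
lemma min_two_mul_tent_le {j : ℤ} (hj : j ∈ Icc 0 (2 * p + 1 : ℤ)) :
    min (2 * tent p j) (2 * p + 1) ≤ tent p (j - 1) + tent p (j + 1) := by
  rw [mem_Icc] at hj; unfold tent; omega

lemma two_sub_one_div_succ_pos : 0 < 2 - 1 / (p + 1 : ℝ) := by
  have : 1 / (p + 1 : ℝ) ≤ 1 :=
    div_le_one_of_le₀ (by linarith [p.cast_nonneg (α := ℝ)]) (by positivity)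
  linarith

lemma tent_super {j : ℤ} (hj : j ∈ Icc 0 (2 * p + 1 : ℤ)) :
    (2 - 1 / (p + 1 : ℝ)) * tent p j ≤ tent p (j - 1) + tent p (j + 1) := by
  have hmin : (min (2 * tent p j : ℝ) (2 * p + 1)) ≤ tent p (j - 1) + tent p (j + 1) := by
    exact_mod_cast min_two_mul_tent_le p hj
  refine le_trans (le_min ?_ ?_) hmin
  · have : (0 : ℝ) ≤ tent p j := by exact_mod_cast tent_nonneg p j
    have : (0 : ℝ) ≤ 1 / (p + 1 : ℝ) := by positivity
    nlinarith
  · have ht : (tent p j : ℝ) ≤ p + 1 := by exact_mod_cast tent_le p j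
    calc (2 - 1 / (p + 1 : ℝ)) * tent p j ≤ (2 - 1 / (p + 1 : ℝ)) * (p + 1) := by
          gcongr
          exact (two_sub_one_div_succ_pos p).le
      _ = 2 * p + 1 := by field_simp; ring

end Tent

noncomputable def cube (d p : ℕ) : Finset (Fin d → ℤ) :=
  Fintype.piFinset fun _ => Icc 0 (2 * p + 1 : ℤ)

lemma card_cube (d p : ℕ) : #(cube d p) = (2 * p + 2) ^ d := by
  simp only [cube, Fintype.card_piFinset, Int.card_Icc, prod_const, card_univ, Fintype.card_fin]
  congr 1

theorem pow_le_card_confined_cube (d p n : ℕ) :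
    (d * (2 - 1 / (p + 1 : ℝ))) ^ n ≤
      (p + 1) ^ d * #{ω : Fin n → Fin d × Bool | Confined (cube d p) ω} := by
  have htent : ∀ j, (0 : ℝ) ≤ tent p j := fun j => by exact_mod_cast tent_nonneg p j
  have hu_le : ∀ x : Fin d → ℤ, ∏ i, (tent p (x i) : ℝ) ≤ (p + 1) ^ d := fun x =>
    (Finset.prod_le_prod (g := fun _ => (p + 1 : ℝ)) (fun i _ => htent _)
      fun i _ => by exact_mod_cast tent_le p (x i)).trans_eq (by simp)
  simpa [tent_zero] using pow_mul_le_card_confined (cube d p) (fun x => ∏ i, (tent p (x i) : ℝ))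
    (mul_nonneg d.cast_nonneg (two_sub_one_div_succ_pos p).le) hu_le
    (fun x hx => by
      obtain ⟨i, hi⟩ : ∃ i, x i ∉ Icc 0 (2 * p + 1 : ℤ) := by simpa [cube] using hx
      exact Finset.prod_eq_zero (mem_univ i) (by simp [tent_eq_zero p hi]))
    (fun x hx => mul_prod_le_sum_prod_add_step _ htent _ (fun j hj => tent_super p hj) x
      (by simpa [cube] using hx))
    n

theorem eventually_lt_log_div_of_le {Z g : ℕ → ℝ} {c μ a : ℝ} (hc : 0 < c) (hμ : 0 < μ)
    (hg : Tendsto (fun n => g n / n) atTop (nhds 0))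
    (hZ : ∀ n, c * μ ^ n * Real.exp (-g n) ≤ Z n) (ha : a < Real.log μ) :
    ∀ᶠ n in atTop, a < Real.log (Z n) / n := by
  have hlog : ∀ n : ℕ, Real.log c + n * Real.log μ - g n ≤ Real.log (Z n) := fun n => by
    have := Real.log_le_log (by positivity) (hZ n)
    rwa [Real.log_mul (by positivity) (by positivity), Real.log_mul (by positivity) (by positivity),
      Real.log_pow, Real.log_exp, ← sub_eq_add_neg] at this
  have hlim : Tendsto (fun n : ℕ => Real.log μ + (Real.log c / n - g n / n)) atTop
      (nhds (Real.log μ)) := by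
    simpa using tendsto_const_nhds.add ((tendsto_const_div_atTop_nhds_zero_nat _).sub hg)
  filter_upwards [hlim.eventually (lt_mem_nhds ha), eventually_gt_atTop 0] with n hn hn0
  calc a < Real.log μ + (Real.log c / n - g n / n) := hn
    _ = (Real.log c + n * Real.log μ - g n) / n := by field_simp; ring
    _ ≤ Real.log (Z n) / n := div_le_div_of_nonneg_right (hlog n) n.cast_nonneg

lemma tendsto_apply_succ_div {f : ℕ → ℝ} (hf : Tendsto (fun n : ℕ => f n / n) atTop (nhds 0)) :
    Tendsto (fun n : ℕ => f (n + 1) / n) atTop (nhds 0) := by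
  have h := ((tendsto_add_atTop_iff_nat 1).mpr hf).mul
    ((tendsto_const_nhds (x := (1 : ℝ))).add (tendsto_const_div_atTop_nhds_zero_nat (1 : ℝ)))
  rw [zero_mul] at h
  refine h.congr' ((eventually_gt_atTop 0).mono fun n hn => ?_)
  have : (n : ℝ) ≠ 0 := by positivity
  push_cast
  field_simp

section Bounds

variable {d : ℕ} {φ : ℕ → ℝ} (hφ0 : φ 0 = 0) (hmono : Monotone φ)
include hφ0 hmono

lemma log_Zpart_div_le (hd : 0 < d) (n : ℕ) : Real.log (Zpart d φ n) / n ≤ Real.log (2 * d) := by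
  have hd1 : (1 : ℝ) ≤ d := by exact_mod_cast hd
  rcases n.eq_zero_or_pos with rfl | hn
  · simpa using Real.log_nonneg (by linarith)
  rw [div_le_iff₀ (by exact_mod_cast hn), mul_comm, ← Real.log_pow]
  exact Real.log_le_log (Zpart_pos hd φ n) (Zpart_le hφ0 hmono n)

lemma pow_mul_exp_le_Zpart (p n : ℕ) :
    ((p + 1 : ℝ) ^ d)⁻¹ * (d * (2 - 1 / (p + 1 : ℝ))) ^ n *
      Real.exp (-((2 * p + 2 : ℝ) ^ d * φ (n + 1))) ≤ Zpart d φ n := by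
  refine le_trans ?_ (card_confined_mul_exp_le_Zpart hφ0 hmono (cube d p) n)
  rw [card_cube, mul_assoc, inv_mul_le_iff₀ (by positivity), ← mul_assoc]
  push_cast
  gcongr
  exact pow_le_card_confined_cube d p n

end Bounds

theorem free_energy_attractive_eq_log_two_d_general (d : ℕ) (hd : 0 < d) (φ : ℕ → ℝ)
    (hφ0 : φ 0 = 0) (hmono : Monotone φ)
    (hsublin : Tendsto (fun ℓ : ℕ => φ ℓ / (ℓ : ℝ)) atTop (nhds 0)) :
    Tendsto (fun n : ℕ => Real.log (Zpart d φ n) / (n : ℝ)) atTop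
      (nhds (Real.log (2 * d))) := by
  refine tendsto_order.2 ⟨fun a ha => ?_, fun b hb =>
    .of_forall fun n => (log_Zpart_div_le hφ0 hmono hd n).trans_lt hb⟩
  have hrate : Tendsto (fun p : ℕ => Real.log (d * (2 - 1 / (p + 1 : ℝ)))) atTop
      (nhds (Real.log (2 * d))) := by
    have h := ((tendsto_const_nhds (x := (2 : ℝ))).sub
      tendsto_one_div_add_atTop_nhds_zero_nat).const_mul (d : ℝ)
    rw [sub_zero, mul_comm] at h
    exact h.log (by positivity)
  obtain ⟨p, hp⟩ := (hrate.eventually (lt_mem_nhds ha)).exists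
  refine eventually_lt_log_div_of_le (by positivity) ?_ ?_ (pow_mul_exp_le_Zpart hφ0 hmono p) hp
  · exact mul_pos (by exact_mod_cast hd) (two_sub_one_div_succ_pos p)
  · simpa only [mul_div_assoc, mul_zero] using (tendsto_apply_succ_div hsublin).const_mul _

/-- For an attractive potential (subadditive, `φ 0 = 0`, nondecreasing, `φ(ℓ)/ℓ → 0`),
the free energy `λ₀ = lim (1/n) log Z_n` equals `log (2d)`. -/
theorem free_energy_attractive_eq_log_two_d (d : ℕ) (hd : 0 < d) (φ : ℕ → ℝ)
    (hφ0 : φ 0 = 0) (hmono : Monotone φ)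
    (hsub : ∀ ℓ₁ ℓ₂ : ℕ, φ (ℓ₁ + ℓ₂) ≤ φ ℓ₁ + φ ℓ₂)
    (hsublin : Tendsto (fun ℓ : ℕ => φ ℓ / (ℓ : ℝ)) atTop (nhds 0)) :
    Tendsto (fun n : ℕ => Real.log (Zpart d φ n) / (n : ℝ)) atTop
      (nhds (Real.log (2 * d))) :=
  free_energy_attractive_eq_log_two_d_general d hd φ hφ0 hmono hsublin
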